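/- arXiv:2109.12661 — 2 statements merged into one kernel-verified Lean document; each statement's English description precedes it below -/
import Mathlib

section
/- Consider the discrete-time LTI system X(k+1) = 𝒟(X(k)) with 𝒟(X) = Σ_{i=0}^{N} Jᵢ X Jᵢᵀ. Suppose there exist symmetric positive definite matrices P and Q such that 𝒟*(P) − P + Q = 0, where 𝒟*(X) = Σ_{i=0}^{N} Jᵢᵀ X Jᵢ. Then for every X₀ ∈ 𝕊ⁿ_{⪰0}, the solution satisfies trace(X(k)) ≤ (λ_max(P)/λ_min(P)) · ρ^{k−k₀} · trace(X₀) for all k ≥ k₀, where ρ = 1 − λ_min(Q)/λ_max(P). -/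
/-!
`V(X) = tr(P X)` is a Lyapunov function for `𝒟`. Since `tr(P 𝒟(X)) = tr(𝒟*(P) X)`, the Lyapunov
equation gives `V(𝒟(X)) = tr((P - Q) X)`. For positive semidefinite `X` the Loewner bounds
`λ_min(A) • 1 ≤ A ≤ λ_max(A) • 1`, paired with `tr(A X) ≥ 0` for positive semidefinite `A`, give
`λ_min(A) tr X ≤ tr(A X) ≤ λ_max(A) tr X`, so `tr(Q X) ≥ λ_min(Q) tr X ≥ (λ_min(Q)/λ_max(P)) V(X)`
and `V` contracts by `ρ` at each step. Comparing `V` with the trace through the eigenvalues of `P`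
at both ends turns `V(X(k)) ≤ ρ^(k-k₀) V(X₀)` into the bound on `tr X(k)`.
-/

open Matrix

namespace Matrix

section Spectral

open MatrixOrder ComplexOrder

variable {𝕜 n : Type*} [RCLike 𝕜] [Fintype n] [DecidableEq n]

theorem PosSemidef.trace_mul_nonneg {A X : Matrix n n 𝕜} (hA : A.PosSemidef)
    (hX : X.PosSemidef) : 0 ≤ (A * X).trace := by
  obtain ⟨B, rfl⟩ := CStarAlgebra.nonneg_iff_eq_star_mul_self.mp hA.nonneg
  rw [Matrix.mul_assoc, trace_mul_comm, Matrix.mul_assoc, star_eq_conjTranspose,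
    ← Matrix.mul_assoc]
  exact (hX.mul_mul_conjTranspose_same B).trace_nonneg

theorem IsHermitian.algebraMap_iInf_eigenvalues_le {A : Matrix n n 𝕜} (hA : A.IsHermitian) :
    algebraMap ℝ (Matrix n n 𝕜) (⨅ i, hA.eigenvalues i) ≤ A := by
  refine algebraMap_le_of_le_spectrum (fun x hx => ?_) hA
  obtain ⟨i, rfl⟩ := hA.spectrum_real_eq_range_eigenvalues ▸ hx
  exact ciInf_le (Set.finite_range _).bddBelow i

theorem IsHermitian.le_algebraMap_iSup_eigenvalues {A : Matrix n n 𝕜} (hA : A.IsHermitian) :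
    A ≤ algebraMap ℝ (Matrix n n 𝕜) (⨆ i, hA.eigenvalues i) := by
  refine le_algebraMap_of_spectrum_le (fun x hx => ?_) hA
  obtain ⟨i, rfl⟩ := hA.spectrum_real_eq_range_eigenvalues ▸ hx
  exact le_ciSup (Set.finite_range _).bddAbove i

theorem trace_mul_le_trace_mul_of_le {A B X : Matrix n n 𝕜} (hAB : A ≤ B)
    (hX : X.PosSemidef) : (A * X).trace ≤ (B * X).trace := by
  have := (le_iff.mp hAB).trace_mul_nonneg hX
  rwa [Matrix.sub_mul, trace_sub, sub_nonneg] at this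

theorem IsHermitian.iInf_eigenvalues_smul_trace_le {A X : Matrix n n 𝕜} (hA : A.IsHermitian)
    (hX : X.PosSemidef) : (⨅ i, hA.eigenvalues i) • X.trace ≤ (A * X).trace := by
  simpa [Algebra.algebraMap_eq_smul_one] using
    trace_mul_le_trace_mul_of_le hA.algebraMap_iInf_eigenvalues_le hX

theorem IsHermitian.trace_mul_le_iSup_eigenvalues_smul {A X : Matrix n n 𝕜} (hA : A.IsHermitian)
    (hX : X.PosSemidef) : (A * X).trace ≤ (⨆ i, hA.eigenvalues i) • X.trace := by
  simpa [Algebra.algebraMap_eq_smul_one] using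
    trace_mul_le_trace_mul_of_le hA.le_algebraMap_iSup_eigenvalues hX

theorem PosDef.iInf_eigenvalues_pos {A : Matrix n n 𝕜} [Nonempty n] (hA : A.PosDef) :
    0 < ⨅ i, hA.1.eigenvalues i := by
  obtain ⟨i, hi⟩ := exists_eq_ciInf_of_finite (f := hA.1.eigenvalues)
  exact hi ▸ hA.eigenvalues_pos i

theorem IsHermitian.iInf_eigenvalues_le_iSup_eigenvalues_of_posSemidef_sub [Nonempty n]
    {A B : Matrix n n 𝕜} (hA : A.IsHermitian) (hB : B.IsHermitian) (hAB : (B - A).PosSemidef) :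
    ⨅ i, hA.eigenvalues i ≤ ⨆ i, hB.eigenvalues i := by
  have := (le_iff.mp ((hA.algebraMap_iInf_eigenvalues_le.trans (le_iff.mpr hAB)).trans
    hB.le_algebraMap_iSup_eigenvalues)).diag_nonneg (i := Classical.arbitrary n)
  simpa [Algebra.algebraMap_eq_smul_one, ← RCLike.ofReal_sub] using this

end Spectral

section Lyapunov

variable {ι m n : Type*} [Fintype m] [Fintype n]

theorem trace_mul_sum_mul_mul_transpose {R : Type*} [CommRing R] (s : Finset ι)
    (J : ι → Matrix m n R) (P : Matrix m m R) (X : Matrix n n R) :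
    (P * ∑ i ∈ s, J i * X * (J i)ᵀ).trace = ((∑ i ∈ s, (J i)ᵀ * P * J i) * X).trace := by
  simp only [Matrix.mul_sum, Finset.sum_mul, trace_sum, Matrix.mul_assoc]
  refine Finset.sum_congr rfl fun i _ => ?_
  rw [← Matrix.mul_assoc, ← Matrix.mul_assoc, trace_mul_comm, Matrix.mul_assoc]

theorem PosSemidef.sum_mul_mul_transpose {X : Matrix n n ℝ} (hX : X.PosSemidef)
    (s : Finset ι) (J : ι → Matrix m n ℝ) : (∑ i ∈ s, J i * X * (J i)ᵀ).PosSemidef :=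
  posSemidef_sum s fun i _ => by
    simpa [conjTranspose_eq_transpose_of_trivial] using hX.mul_mul_conjTranspose_same (J i)

variable [DecidableEq n]

theorem PosSemidef.trace_sub_mul_le {P Q X : Matrix n n ℝ} (hP : P.PosSemidef)
    (hQ : Q.PosSemidef) (hX : X.PosSemidef) :
    ((P - Q) * X).trace ≤
      (1 - (⨅ i, hQ.1.eigenvalues i) / (⨆ i, hP.1.eigenvalues i)) * (P * X).trace := by
  set b := ⨆ i, hP.1.eigenvalues i
  set c := ⨅ i, hQ.1.eigenvalues i
  have hb : 0 ≤ b := Real.iSup_nonneg hP.eigenvalues_nonneg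
  have hc : 0 ≤ c := Real.iInf_nonneg hQ.eigenvalues_nonneg
  have hQX : c * X.trace ≤ (Q * X).trace := hQ.1.iInf_eigenvalues_smul_trace_le hX
  have hPX : (P * X).trace ≤ b * X.trace := hP.1.trace_mul_le_iSup_eigenvalues_smul hX
  have hcb : c / b * b ≤ c := by
    rcases hb.eq_or_lt with hb | hb
    · simpa [← hb]
    · rw [div_mul_cancel₀ c hb.ne']
  have : c / b * (P * X).trace ≤ c * X.trace :=
    calc c / b * (P * X).trace ≤ c / b * (b * X.trace) := by gcongr
      _ = c / b * b * X.trace := by ring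
      _ ≤ c * X.trace := by gcongr; exact hX.trace_nonneg
  rw [Matrix.sub_mul, trace_sub]
  linarith

theorem PosSemidef.trace_mul_sum_mul_mul_transpose_le {P Q X : Matrix n n ℝ}
    (hP : P.PosSemidef) (hQ : Q.PosSemidef) (hX : X.PosSemidef) {s : Finset ι}
    {J : ι → Matrix n n ℝ} (hPQ : ∑ i ∈ s, (J i)ᵀ * P * J i = P - Q) :
    (P * ∑ i ∈ s, J i * X * (J i)ᵀ).trace ≤
      (1 - (⨅ i, hQ.1.eigenvalues i) / (⨆ i, hP.1.eigenvalues i)) * (P * X).trace := by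
  rw [trace_mul_sum_mul_mul_transpose, hPQ]
  exact hP.trace_sub_mul_le hQ hX

theorem PosSemidef.one_sub_iInf_div_iSup_eigenvalues_nonneg [Nonempty n]
    {P Q : Matrix n n ℝ} (hP : P.PosSemidef) (hQ : Q.IsHermitian) (hPQ : (P - Q).PosSemidef) :
    0 ≤ 1 - (⨅ i, hQ.eigenvalues i) / (⨆ i, hP.1.eigenvalues i) :=
  sub_nonneg.mpr <| div_le_one_of_le₀
    (hQ.iInf_eigenvalues_le_iSup_eigenvalues_of_posSemidef_sub hP.1 hPQ)
    (Real.iSup_nonneg hP.eigenvalues_nonneg)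

end Lyapunov

end Matrix

theorem discrete_lyapunov_trace_decay {n N : ℕ}
    (J : ℕ → Matrix (Fin n) (Fin n) ℝ) (P Q : Matrix (Fin n) (Fin n) ℝ)
    (hP : P.PosDef) (hQ : Q.PosDef)
    (hLyap : (∑ i ∈ Finset.range (N + 1), (J i)ᵀ * P * J i) - P + Q = 0)
    (k₀ : ℕ) (X₀ : Matrix (Fin n) (Fin n) ℝ) (hX0 : X₀.PosSemidef)
    (X : ℕ → Matrix (Fin n) (Fin n) ℝ) (hinit : X k₀ = X₀)
    (hrec : ∀ k, k₀ ≤ k → X (k + 1) = ∑ i ∈ Finset.range (N + 1), J i * X k * (J i)ᵀ) :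
    ∀ k, k₀ ≤ k →
      (X k).trace ≤
        ((⨆ i, hP.1.eigenvalues i) / (⨅ i, hP.1.eigenvalues i)) *
          (1 - (⨅ i, hQ.1.eigenvalues i) / (⨆ i, hP.1.eigenvalues i)) ^ (k - k₀) * X₀.trace := by
  intro k hk
  obtain ⟨m, rfl⟩ := Nat.exists_eq_add_of_le hk
  rw [Nat.add_sub_cancel_left]
  rcases isEmpty_or_nonempty (Fin n) with hn | hn
  · simp [Matrix.trace]
  set ρ := 1 - (⨅ i, hQ.1.eigenvalues i) / (⨆ i, hP.1.eigenvalues i)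
  have hPQ : ∑ i ∈ Finset.range (N + 1), (J i)ᵀ * P * J i = P - Q := by
    rw [← sub_eq_zero, ← hLyap]; abel
  have hρ : 0 ≤ ρ := hP.posSemidef.one_sub_iInf_div_iSup_eigenvalues_nonneg hQ.1 <| by
    simpa [← hPQ] using hP.posSemidef.sum_mul_mul_transpose (Finset.range (N + 1)) fun i => (J i)ᵀ
  have hpsd : ∀ j, (X (k₀ + j)).PosSemidef := by
    intro j
    induction j with
    | zero => exact hinit ▸ hX0
    | succ j ih => exact hrec _ (Nat.le_add_right _ _) ▸ ih.sum_mul_mul_transpose _ _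
  have hdecay : (P * X (k₀ + m)).trace ≤ ρ ^ m * (P * X₀).trace := by
    simpa [hinit] using le_geom (u := fun j => (P * X (k₀ + j)).trace) hρ m fun j _ => by
      rw [← add_assoc, hrec _ (Nat.le_add_right _ _)]
      exact hP.posSemidef.trace_mul_sum_mul_mul_transpose_le hQ.posSemidef (hpsd j) hPQ
  have hlow := hP.1.iInf_eigenvalues_smul_trace_le (hpsd m)
  have hup := hP.1.trace_mul_le_iSup_eigenvalues_smul hX0
  rw [smul_eq_mul] at hlow hup
  rw [div_mul_eq_mul_div, div_mul_eq_mul_div, le_div_iff₀ hP.iInf_eigenvalues_pos]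
  calc (X (k₀ + m)).trace * ⨅ i, hP.1.eigenvalues i ≤ ρ ^ m * (P * X₀).trace := by linarith
    _ ≤ ρ ^ m * ((⨆ i, hP.1.eigenvalues i) * X₀.trace) := by gcongr
    _ = _ := by ring
end

section
/- Consider the delayed matrix difference system X(k+1) = 𝒟(X(k)) + Σ_{i=1}^{N} 𝒯ᵢ(X(k−τᵢ)), with 𝒟(X) = Σ_{j=0}^{N} Jⱼ X Jⱼᵀ, 𝒯ᵢ(X) = Hᵢ X Hᵢᵀ, delays τᵢ ∈ ℤ_{≥0}, and initial condition Ξ(k) ∈ 𝕊ⁿ_{⪰0} for k ∈ {−τ̄,…,0} where τ̄ = max τᵢ. Suppose there exist symmetric positive definite matrices P, Q₁,…,Q_N and ε > 0 such that 𝒟*(P) − P + Σᵢ Qᵢ ⪯ −εI and 𝒯ᵢ*(P) − Qᵢ ⪯ 0 for all i. Then the functional V(X_k) = ⟨P, X(k)⟩ + Σ_{i=1}^{N} Σ_{j=−τᵢ}^{−1} ⟨Qᵢ, X(k+j)⟩ satisfies V(X_{k+1}) − V(X_k) ≤ −ε·trace(X(k)) along every solution. -/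
open Matrix BigOperators

noncomputable def frob {n : ℕ} (A B : Matrix (Fin n) (Fin n) ℝ) : ℝ := (A * Bᵀ).trace

/-!
The window sums of `V` telescope, so `V(X_{k+1}) - V(X_k)` is
`⟨𝒟*(P) - P + Σ Qᵢ, X(k)⟩ + Σᵢ ⟨𝒯ᵢ*(P) - Qᵢ, X(k - τᵢ)⟩`. The recursion preserves positive
semidefiniteness, since `𝒟` and `𝒯ᵢ` are sums of congruences, and `⟨A, B⟩ ≥ 0` for positive
semidefinite `A`, `B`; so the two matrix inequalities bound the first term by `-ε trace X(k)` and
each delayed term by `0`.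
-/

open scoped ComplexOrder MatrixOrder in
theorem Matrix.PosSemidef.trace_mul_nonneg_s14 {𝕜 ι : Type*} [RCLike 𝕜] [Fintype ι]
    {A B : Matrix ι ι 𝕜} (hA : A.PosSemidef) (hB : B.PosSemidef) : 0 ≤ (A * B).trace := by
  classical
  obtain ⟨C, rfl⟩ := CStarAlgebra.nonneg_iff_eq_star_mul_self.mp hA.nonneg
  rw [Matrix.mul_assoc, trace_mul_comm, Matrix.mul_assoc, ← Matrix.mul_assoc,
    star_eq_conjTranspose]
  exact (hB.mul_mul_conjTranspose_same C).trace_nonneg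

theorem Matrix.PosSemidef.mul_mul_transpose_same {ι : Type*} [Fintype ι] {A : Matrix ι ι ℝ}
    (hA : A.PosSemidef) (B : Matrix ι ι ℝ) : (B * A * Bᵀ).PosSemidef := by
  simpa only [conjTranspose_eq_transpose_of_trivial] using hA.mul_mul_conjTranspose_same B

theorem Finset.sum_Ico_add_one_sub_sum_Ico {M : Type*} [AddCommGroup M] (f : ℤ → M) {a b : ℤ}
    (hab : a ≤ b) :
    ∑ j ∈ Ico (a + 1) (b + 1), f j - ∑ j ∈ Ico a b, f j = f b - f a := by
  have top : ∑ j ∈ Ico a (b + 1), f j = ∑ j ∈ Ico a b, f j + f b := by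
    rw [← insert_Ico_right_eq_Ico_add_one hab, sum_insert right_notMem_Ico, add_comm]
  have bot : ∑ j ∈ Ico a (b + 1), f j = f a + ∑ j ∈ Ico (a + 1) (b + 1), f j := by
    rw [← insert_Ico_add_one_left_eq_Ico (Int.lt_add_one_iff.mpr hab),
      sum_insert (by simp)]
  rw [sub_eq_sub_iff_add_eq_add, add_comm, ← bot, top, add_comm]

section frob

variable {n : ℕ}

theorem frob_nonneg {A B : Matrix (Fin n) (Fin n) ℝ} (hA : A.PosSemidef) (hB : B.PosSemidef) :
    0 ≤ frob A B := by
  rw [frob, ← conjTranspose_eq_transpose_of_trivial, hB.isHermitian.eq]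
  exact hA.trace_mul_nonneg_s14 hB

theorem frob_add_left (A A' B : Matrix (Fin n) (Fin n) ℝ) :
    frob (A + A') B = frob A B + frob A' B := by
  simp only [frob, Matrix.add_mul, trace_add]

theorem frob_sub_left (A A' B : Matrix (Fin n) (Fin n) ℝ) :
    frob (A - A') B = frob A B - frob A' B := by
  simp only [frob, Matrix.sub_mul, trace_sub]

theorem frob_smul_left (c : ℝ) (A B : Matrix (Fin n) (Fin n) ℝ) :
    frob (c • A) B = c * frob A B := by
  simp only [frob, Matrix.smul_mul, trace_smul, smul_eq_mul]

theorem frob_one_left (B : Matrix (Fin n) (Fin n) ℝ) : frob 1 B = B.trace := by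
  simp only [frob, Matrix.one_mul, trace_transpose]

theorem frob_sum_left {ι : Type*} (s : Finset ι) (A : ι → Matrix (Fin n) (Fin n) ℝ)
    (B : Matrix (Fin n) (Fin n) ℝ) : frob (∑ i ∈ s, A i) B = ∑ i ∈ s, frob (A i) B := by
  simp only [frob, Matrix.sum_mul, trace_sum]

theorem frob_add_right (A B B' : Matrix (Fin n) (Fin n) ℝ) :
    frob A (B + B') = frob A B + frob A B' := by
  simp only [frob, transpose_add, Matrix.mul_add, trace_add]

theorem frob_sum_right {ι : Type*} (s : Finset ι) (A : Matrix (Fin n) (Fin n) ℝ)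
    (B : ι → Matrix (Fin n) (Fin n) ℝ) :
    frob A (∑ i ∈ s, B i) = ∑ i ∈ s, frob A (B i) := by
  simp only [frob, transpose_sum, Matrix.mul_sum, trace_sum]

theorem frob_mul_mul_transpose_right (A C B : Matrix (Fin n) (Fin n) ℝ) :
    frob A (C * B * Cᵀ) = frob (Cᵀ * A * C) B := by
  simp only [frob, transpose_mul, transpose_transpose, ← Matrix.mul_assoc]
  rw [trace_mul_comm]
  simp only [Matrix.mul_assoc]

end frob

theorem posSemidef_of_delayed_recursion {n ι κ : Type*} [Fintype n] (s : Finset ι)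
    (t : Finset κ) (J : ι → Matrix n n ℝ) (H : κ → Matrix n n ℝ) (τ : κ → ℕ) (T : ℕ)
    (hτ : ∀ i ∈ t, τ i ≤ T) (X : ℤ → Matrix n n ℝ)
    (hinit : ∀ k : ℤ, -(T : ℤ) ≤ k → k ≤ 0 → (X k).PosSemidef)
    (hrec : ∀ k : ℤ, 0 ≤ k →
      X (k + 1) = (∑ j ∈ s, J j * X k * (J j)ᵀ) +
        ∑ i ∈ t, H i * X (k - (τ i : ℤ)) * (H i)ᵀ)
    {k : ℤ} (hk : -(T : ℤ) ≤ k) : (X k).PosSemidef := by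
  suffices h : ∀ m : ℕ, ∀ k : ℤ, -(T : ℤ) ≤ k → k ≤ m → (X k).PosSemidef from
    h k.toNat k hk (Int.self_le_toNat k)
  intro m
  induction m with
  | zero => exact hinit
  | succ m ih =>
    intro k hk hkm
    rcases lt_or_eq_of_le hkm with hlt | rfl
    · exact ih k hk (by omega)
    rw [Nat.cast_succ, hrec m (by omega)]
    refine (posSemidef_sum s fun j _ => ?_).add (posSemidef_sum t fun i hi => ?_)
    · exact (ih m (by omega) le_rfl).mul_mul_transpose_same (J j)
    · have := hτ i hi
      exact (ih _ (by omega) (by omega)).mul_mul_transpose_same (H i)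

theorem delayed_functional_decrease_general {n N : ℕ}
    (J H : ℕ → Matrix (Fin n) (Fin n) ℝ) (τ : ℕ → ℕ)
    (P : Matrix (Fin n) (Fin n) ℝ) (Q : ℕ → Matrix (Fin n) (Fin n) ℝ)
    (ε : ℝ)
    (hLyap1 : ((-ε) • (1 : Matrix (Fin n) (Fin n) ℝ) -
        ((∑ j ∈ Finset.range (N + 1), (J j)ᵀ * P * J j) - P +
          ∑ i ∈ Finset.Icc 1 N, Q i)).PosSemidef)
    (hLyap2 : ∀ i ∈ Finset.Icc 1 N, (Q i - (H i)ᵀ * P * H i).PosSemidef)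
    (X : ℤ → Matrix (Fin n) (Fin n) ℝ)
    (hinit : ∀ k : ℤ, -(((Finset.Icc 1 N).sup τ : ℕ) : ℤ) ≤ k → k ≤ 0 → (X k).PosSemidef)
    (hrec : ∀ k : ℤ, 0 ≤ k →
      X (k + 1) = (∑ j ∈ Finset.range (N + 1), J j * X k * (J j)ᵀ) +
        ∑ i ∈ Finset.Icc 1 N, H i * X (k - (τ i : ℤ)) * (H i)ᵀ) :
    ∀ k : ℤ, 0 ≤ k →
      (frob P (X (k + 1)) +
          ∑ i ∈ Finset.Icc 1 N, ∑ j ∈ Finset.Ico (k + 1 - (τ i : ℤ)) (k + 1), frob (Q i) (X j)) -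
        (frob P (X k) +
          ∑ i ∈ Finset.Icc 1 N, ∑ j ∈ Finset.Ico (k - (τ i : ℤ)) k, frob (Q i) (X j)) ≤
        -ε * (X k).trace := by
  intro k hk
  have hτ : ∀ i ∈ Finset.Icc 1 N, τ i ≤ (Finset.Icc 1 N).sup τ := fun _ => Finset.le_sup
  have hpsd {j : ℤ} (hj : -(((Finset.Icc 1 N).sup τ : ℕ) : ℤ) ≤ j) : (X j).PosSemidef :=
    posSemidef_of_delayed_recursion _ _ J H τ _ hτ X hinit hrec hj
  have hcurrent : 0 ≤ frob _ (X k) := frob_nonneg hLyap1 (hpsd (by omega))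
  simp only [frob_sub_left, frob_add_left, frob_sum_left, frob_smul_left, frob_one_left]
    at hcurrent
  have hdelayed : ∀ i ∈ Finset.Icc 1 N,
      frob ((H i)ᵀ * P * H i) (X (k - τ i)) ≤ frob (Q i) (X (k - τ i)) := fun i hi =>
    sub_nonneg.mp <| frob_sub_left .. ▸
      frob_nonneg (hLyap2 i hi) (hpsd (by have := hτ i hi; omega))
  have hnext : frob P (X (k + 1)) =
      ∑ j ∈ Finset.range (N + 1), frob ((J j)ᵀ * P * J j) (X k) +
      ∑ i ∈ Finset.Icc 1 N, frob ((H i)ᵀ * P * H i) (X (k - τ i)) := by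
    simp only [hrec k hk, frob_add_right, frob_sum_right, frob_mul_mul_transpose_right]
  have hwindow : ∀ i ∈ Finset.Icc 1 N,
      ∑ j ∈ Finset.Ico (k + 1 - τ i) (k + 1), frob (Q i) (X j) -
        ∑ j ∈ Finset.Ico (k - τ i) k, frob (Q i) (X j) =
      frob (Q i) (X k) - frob (Q i) (X (k - τ i)) :=
    fun i _ => by
      rw [show k + 1 - (τ i : ℤ) = k - τ i + 1 by ring]
      exact Finset.sum_Ico_add_one_sub_sum_Ico _ (by omega)
  have hdelayed_sum := Finset.sum_le_sum hdelayed
  rw [add_sub_add_comm, ← Finset.sum_sub_distrib, Finset.sum_congr rfl hwindow,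
    Finset.sum_sub_distrib]
  linarith

theorem delayed_functional_decrease {n N : ℕ}
    (J H : ℕ → Matrix (Fin n) (Fin n) ℝ) (τ : ℕ → ℕ)
    (P : Matrix (Fin n) (Fin n) ℝ) (Q : ℕ → Matrix (Fin n) (Fin n) ℝ)
    (hP : P.PosDef) (hQ : ∀ i ∈ Finset.Icc 1 N, (Q i).PosDef)
    (ε : ℝ) (hε : 0 < ε)
    (hLyap1 : ((-ε) • (1 : Matrix (Fin n) (Fin n) ℝ) -
        ((∑ j ∈ Finset.range (N + 1), (J j)ᵀ * P * J j) - P +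
          ∑ i ∈ Finset.Icc 1 N, Q i)).PosSemidef)
    (hLyap2 : ∀ i ∈ Finset.Icc 1 N, (Q i - (H i)ᵀ * P * H i).PosSemidef)
    (X : ℤ → Matrix (Fin n) (Fin n) ℝ)
    (hinit : ∀ k : ℤ, -(((Finset.Icc 1 N).sup τ : ℕ) : ℤ) ≤ k → k ≤ 0 → (X k).PosSemidef)
    (hrec : ∀ k : ℤ, 0 ≤ k →
      X (k + 1) = (∑ j ∈ Finset.range (N + 1), J j * X k * (J j)ᵀ) +
        ∑ i ∈ Finset.Icc 1 N, H i * X (k - (τ i : ℤ)) * (H i)ᵀ) :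
    ∀ k : ℤ, 0 ≤ k →
      (frob P (X (k + 1)) +
          ∑ i ∈ Finset.Icc 1 N, ∑ j ∈ Finset.Ico (k + 1 - (τ i : ℤ)) (k + 1), frob (Q i) (X j)) -
        (frob P (X k) +
          ∑ i ∈ Finset.Icc 1 N, ∑ j ∈ Finset.Ico (k - (τ i : ℤ)) k, frob (Q i) (X j)) ≤
        -ε * (X k).trace :=
  delayed_functional_decrease_general J H τ P Q ε hLyap1 hLyap2 X hinit hrec
end
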